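/- For a real Hilbert space H, the self-Jung constant equals the Jung constant: sup{r_{c̄o A}(A) : A ⊆ H bounded, d(A) = 1} = sup{r_H(A) : A ⊆ H bounded, d(A) = 1}, and if H is infinite-dimensional this common value is 1/√2. -/

import Mathlib

/-!
In a Hilbert space the nearest-point projection onto the closed convex hull of `A` brings every
point closer to each point of `A` (the projection makes an obtuse angle), so restricting centres
to `c̄o A` does not change the Chebyshev radius.

Jung's bound `r(A) ≤ d(A) / √2`: take an almost optimal centre `y` and a point `x₁ ∈ A` almost at
distance `r` from it, and move the centre to `z = (1 - t) y + t x₁`. Some `x₂ ∈ A` is still almost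
at distance `r` from `z`, and `‖x₂ - z‖² = (1 - t)‖x₂ - y‖² + t‖x₂ - x₁‖² - t(1 - t)‖x₁ - y‖²`
then forces `‖x₁ - x₂‖² ≥ (2 - O(t)) r²`. In infinite dimension the bound is attained by
`{eₙ / √2}` for an orthonormal sequence `(eₙ)`: since `⟪eₙ, y⟫ → 0`, the distances
`‖eₙ / √2 - y‖²` tend to `1 / 2 + ‖y‖²` for every `y`.
-/

noncomputable def chebRadius {H : Type*} [NormedAddCommGroup H] (A : Set H) : ℝ :=
  ⨅ y : H, ⨆ x : A, ‖(x : H) - y‖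

noncomputable def chebRadiusIn {H : Type*} [NormedAddCommGroup H] (B A : Set H) : ℝ :=
  ⨅ y : B, ⨆ x : A, ‖(x : H) - (y : H)‖

open Metric Bornology Set Filter Topology

section Normed

variable {H : Type*} [NormedAddCommGroup H] {A : Set H}

noncomputable def farthestDist (A : Set H) (y : H) : ℝ :=
  ⨆ x : A, ‖(x : H) - y‖

lemma farthestDist_nonneg (A : Set H) (y : H) : 0 ≤ farthestDist A y :=
  Real.iSup_nonneg fun _ => norm_nonneg _

lemma norm_sub_le_farthestDist (hA : IsBounded A) {x : H} (hx : x ∈ A) (y : H) :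
    ‖x - y‖ ≤ farthestDist A y := by
  obtain ⟨R, hR⟩ := hA.exists_norm_le
  refine le_ciSup (f := fun x : A => ‖(x : H) - y‖) ⟨R + ‖y‖, ?_⟩ ⟨x, hx⟩
  rintro _ ⟨z, rfl⟩
  exact (norm_sub_le _ _).trans (by linarith [hR z z.2])

lemma chebRadius_le_farthestDist (A : Set H) (y : H) : chebRadius A ≤ farthestDist A y :=
  ciInf_le ⟨0, by rintro _ ⟨z, rfl⟩; exact farthestDist_nonneg A z⟩ y

lemma chebRadius_nonneg (A : Set H) : 0 ≤ chebRadius A :=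
  le_ciInf fun y => farthestDist_nonneg A y

lemma exists_farthestDist_lt {r : ℝ} (hr : chebRadius A < r) : ∃ y, farthestDist A y < r :=
  exists_lt_of_ciInf_lt hr

lemma exists_lt_norm_sub_of_lt_chebRadius {r : ℝ} (hr₀ : 0 ≤ r) (hr : r < chebRadius A)
    (y : H) : ∃ x ∈ A, r < ‖x - y‖ := by
  by_contra! h
  have : farthestDist A y ≤ r := Real.iSup_le (fun x => h x x.2) hr₀
  linarith [chebRadius_le_farthestDist A y]

end Normed

section Inner

variable {H : Type*} [NormedAddCommGroup H] [InnerProductSpace ℝ H]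

lemma norm_sub_lineMap_sq (x y z : H) (t : ℝ) :
    ‖x - AffineMap.lineMap y z t‖ ^ 2 =
      (1 - t) * ‖x - y‖ ^ 2 + t * ‖x - z‖ ^ 2 - t * (1 - t) * ‖z - y‖ ^ 2 := by
  have hz : x - z = (x - y) - (z - y) := by abel
  have hl : x - AffineMap.lineMap y z t = (x - y) - t • (z - y) := by
    rw [AffineMap.lineMap_apply_module']; abel
  rw [hl, hz, norm_sub_sq_real (x - y) (t • (z - y)), norm_sub_sq_real (x - y) (z - y),
    norm_smul, inner_smul_right, mul_pow, Real.norm_eq_abs, sq_abs]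
  ring

lemma exists_mem_forall_norm_sub_le {K : Set H} (hne : K.Nonempty) (hK : IsComplete K)
    (hconv : Convex ℝ K) (y : H) : ∃ v ∈ K, ∀ x ∈ K, ‖x - v‖ ≤ ‖x - y‖ := by
  obtain ⟨v, hvK, hv⟩ := exists_norm_eq_iInf_of_complete_convex hne hK hconv y
  refine ⟨v, hvK, fun x hx => ?_⟩
  have hobtuse : inner ℝ (x - v) (y - v) ≤ 0 := by
    rw [real_inner_comm]; exact (norm_eq_iInf_iff_real_inner_le_zero hconv hvK).mp hv x hx
  have hexp : ‖x - y‖ ^ 2 = ‖x - v‖ ^ 2 - 2 * inner ℝ (x - v) (y - v) + ‖y - v‖ ^ 2 := by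
    rw [← norm_sub_sq_real]; congr 2; abel
  have : ‖x - v‖ ^ 2 ≤ ‖x - y‖ ^ 2 := by nlinarith [sq_nonneg ‖y - v‖]
  exact le_of_pow_le_pow_left₀ two_ne_zero (norm_nonneg _) this

end Inner

section Jung

variable {H : Type*} [NormedAddCommGroup H] [InnerProductSpace ℝ H] {A : Set H}

lemma chebRadiusIn_eq_chebRadius_of_subset {K : Set H} (hne : K.Nonempty) (hK : IsComplete K)
    (hconv : Convex ℝ K) (hAK : A ⊆ K) (hA : IsBounded A) :
    chebRadiusIn K A = chebRadius A := by
  have : Nonempty K := hne.to_subtype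
  apply le_antisymm
  · refine le_ciInf fun y => ?_
    obtain ⟨v, hvK, hv⟩ := exists_mem_forall_norm_sub_le hne hK hconv y
    calc chebRadiusIn K A ≤ farthestDist A v :=
          ciInf_le (f := fun v : K => farthestDist A v)
            ⟨0, by rintro _ ⟨w, rfl⟩; exact farthestDist_nonneg A w⟩ ⟨v, hvK⟩
      _ ≤ farthestDist A y :=
          Real.iSup_le (fun x => (hv x (hAK x.2)).trans (norm_sub_le_farthestDist hA x.2 y))
            (farthestDist_nonneg A y)
  · exact le_ciInf fun v => chebRadius_le_farthestDist A v

lemma chebRadiusIn_closure_convexHull [CompleteSpace H] (hA : IsBounded A) :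
    chebRadiusIn (closure (convexHull ℝ A)) A = chebRadius A := by
  rcases A.eq_empty_or_nonempty with rfl | hne
  · simp [chebRadiusIn, chebRadius]
  have hAK : A ⊆ closure (convexHull ℝ A) := (subset_convexHull ℝ A).trans subset_closure
  exact chebRadiusIn_eq_chebRadius_of_subset (hne.mono hAK) isClosed_closure.isComplete
    (convex_convexHull ℝ A).closure hAK hA

lemma chebRadius_sq_mul_le_diam_sq (hA : IsBounded A) {t : ℝ} (ht₀ : 0 < t) (ht₁ : t < 1) :
    chebRadius A ^ 2 * (2 - 5 * t) ≤ diam A ^ 2 := by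
  rcases (chebRadius_nonneg A).eq_or_lt with hs | hs
  · rw [← hs, sq, zero_mul, zero_mul]; positivity
  set s := chebRadius A
  -- `δ = o(t)`, so that the errors survive division by `t`
  set δ := s * t ^ 2
  have hδ : 0 < δ := by positivity
  have hsδ : 0 ≤ s - δ := by
    have : t ^ 2 ≤ 1 := by nlinarith
    nlinarith
  obtain ⟨y, hy⟩ := exists_farthestDist_lt (lt_add_of_pos_right s hδ)
  obtain ⟨x₁, hx₁A, hx₁⟩ := exists_lt_norm_sub_of_lt_chebRadius hsδ (sub_lt_self s hδ) y
  set z := AffineMap.lineMap y x₁ t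
  obtain ⟨x₂, hx₂A, hx₂⟩ := exists_lt_norm_sub_of_lt_chebRadius hsδ (sub_lt_self s hδ) z
  have hy₂ : ‖x₂ - y‖ ≤ s + δ := (norm_sub_le_farthestDist hA hx₂A y).trans hy.le
  have hd : ‖x₂ - x₁‖ ≤ diam A := by
    rw [← dist_eq_norm]; exact dist_le_diam_of_mem hA hx₂A hx₁A
  have h₁ : (s - δ) ^ 2 ≤ ‖x₁ - y‖ ^ 2 := by gcongr
  have h₂ : (s - δ) ^ 2 ≤ ‖x₂ - z‖ ^ 2 := by gcongr
  have h₂y : ‖x₂ - y‖ ^ 2 ≤ (s + δ) ^ 2 := by gcongr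
  have hpoly : t * (s ^ 2 * (2 - 5 * t)) ≤
      t * (1 - t) * (s - δ) ^ 2 + (s - δ) ^ 2 - (1 - t) * (s + δ) ^ 2 := by
    have : 0 ≤ t ^ 4 * s ^ 2 * (2 + 2 * t - t ^ 2) := by
      have : 0 < 2 + 2 * t - t ^ 2 := by nlinarith
      positivity
    linear_combination this
  have key : t * (s ^ 2 * (2 - 5 * t)) ≤ t * diam A ^ 2 := calc
    _ ≤ t * (1 - t) * (s - δ) ^ 2 + (s - δ) ^ 2 - (1 - t) * (s + δ) ^ 2 := hpoly
    _ ≤ t * (1 - t) * ‖x₁ - y‖ ^ 2 + ‖x₂ - z‖ ^ 2 - (1 - t) * ‖x₂ - y‖ ^ 2 := by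
      have : 0 ≤ 1 - t := by linarith
      gcongr
    _ = t * ‖x₂ - x₁‖ ^ 2 := by rw [norm_sub_lineMap_sq]; ring
    _ ≤ t * diam A ^ 2 := by gcongr
  exact le_of_mul_le_mul_left key ht₀

lemma two_mul_chebRadius_sq_le_diam_sq (hA : IsBounded A) :
    2 * chebRadius A ^ 2 ≤ diam A ^ 2 := by
  have hlim : Tendsto (fun t : ℝ => chebRadius A ^ 2 * (2 - 5 * t)) (𝓝[>] 0)
      (𝓝 (chebRadius A ^ 2 * (2 - 5 * 0))) :=
    ((by fun_prop : Continuous fun t : ℝ => chebRadius A ^ 2 * (2 - 5 * t)).tendsto 0).mono_left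
      nhdsWithin_le_nhds
  have hbound : ∀ᶠ t in 𝓝[>] (0 : ℝ), chebRadius A ^ 2 * (2 - 5 * t) ≤ diam A ^ 2 := by
    filter_upwards [Ioo_mem_nhdsGT one_pos] with t ht
    exact chebRadius_sq_mul_le_diam_sq hA ht.1 ht.2
  linarith [le_of_tendsto hlim hbound]

lemma chebRadius_le_diam_div_sqrt_two (hA : IsBounded A) :
    chebRadius A ≤ diam A / √2 := by
  rw [le_div_iff₀ (by positivity)]
  refine (pow_le_pow_iff_left₀ (by have := chebRadius_nonneg A; positivity) diam_nonneg
    two_ne_zero).mp ?_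
  rw [mul_pow, Real.sq_sqrt zero_le_two, mul_comm]
  exact two_mul_chebRadius_sq_le_diam_sq hA

end Jung

section InfiniteDimensional

variable {H : Type*} [NormedAddCommGroup H] [InnerProductSpace ℝ H]

lemma exists_orthonormal_nat (h : ¬ FiniteDimensional ℝ H) : ∃ e : ℕ → H, Orthonormal ℝ e := by
  let b := Module.Basis.ofVectorSpace ℝ H
  have : Infinite (Module.Basis.ofVectorSpaceIndex ℝ H) := by
    by_contra hfin
    rw [not_infinite_iff_finite] at hfin
    exact h (Module.Finite.of_basis b)
  let f := Infinite.natEmbedding (Module.Basis.ofVectorSpaceIndex ℝ H)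
  exact ⟨InnerProductSpace.gramSchmidtNormed ℝ (b ∘ f),
    InnerProductSpace.gramSchmidtNormed_orthonormal (b.linearIndependent.comp f f.injective)⟩

namespace Orthonormal

variable {e : ℕ → H}

lemma tendsto_inner_atTop_zero (he : Orthonormal ℝ e) (y : H) :
    Tendsto (fun n => inner ℝ (e n) y) atTop (𝓝 0) := by
  rw [tendsto_zero_iff_norm_tendsto_zero]
  have := (Real.continuous_sqrt.tendsto 0).comp
    (he.inner_products_summable (x := y)).tendsto_atTop_zero
  simpa [Function.comp_def, Real.sqrt_sq_eq_abs] using this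

lemma tendsto_norm_smul_sub_sq (he : Orthonormal ℝ e) (c : ℝ) (y : H) :
    Tendsto (fun n => ‖c • e n - y‖ ^ 2) atTop (𝓝 (c ^ 2 + ‖y‖ ^ 2)) := by
  have hexp : ∀ n, ‖c • e n - y‖ ^ 2 = c ^ 2 - 2 * c * inner ℝ (e n) y + ‖y‖ ^ 2 := fun n => by
    rw [norm_sub_sq_real, norm_smul, he.1 n, real_inner_smul_left, Real.norm_eq_abs, mul_pow,
      sq_abs]
    ring
  simp_rw [hexp]
  convert (((he.tendsto_inner_atTop_zero y).const_mul (2 * c)).const_sub (c ^ 2)).add_const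
    (‖y‖ ^ 2) using 2
  ring

lemma isBounded_range_smul (he : Orthonormal ℝ e) (c : ℝ) :
    IsBounded (range fun n => c • e n) :=
  isBounded_iff_forall_norm_le.2 ⟨|c|, by rintro _ ⟨n, rfl⟩; simp [norm_smul, he.1 n]⟩

lemma le_chebRadius_range_smul (he : Orthonormal ℝ e) {c : ℝ} (hc : 0 ≤ c) :
    c ≤ chebRadius (range fun n => c • e n) := by
  refine le_ciInf fun y => show c ≤ farthestDist _ y from ?_
  have hsq : c ^ 2 + ‖y‖ ^ 2 ≤ farthestDist (range fun n => c • e n) y ^ 2 :=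
    le_of_tendsto' (he.tendsto_norm_smul_sub_sq c y) fun n => by
      gcongr; exact norm_sub_le_farthestDist (he.isBounded_range_smul c) ⟨n, rfl⟩ y
  exact (pow_le_pow_iff_left₀ hc (farthestDist_nonneg _ _) two_ne_zero).mp
    (by nlinarith [sq_nonneg ‖y‖])

lemma diam_range_smul (he : Orthonormal ℝ e) {c : ℝ} (hc : 0 ≤ c) :
    diam (range fun n => c • e n) = c * √2 := by
  have hdist : ∀ m n, m ≠ n → dist (c • e m) (c • e n) = c * √2 := by
    intro m n hmn
    rw [dist_eq_norm, ← smul_sub, norm_smul, Real.norm_of_nonneg hc,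
      ← Real.sqrt_sq (norm_nonneg (e m - e n)), norm_sub_sq_real, he.1, he.1, he.2 hmn]
    norm_num
  apply le_antisymm
  · refine diam_le_of_forall_dist_le (by positivity) ?_
    rintro _ ⟨m, rfl⟩ _ ⟨n, rfl⟩
    rcases eq_or_ne m n with rfl | hmn
    · rw [dist_self]; positivity
    · exact (hdist m n hmn).le
  · rw [← hdist 0 1 zero_ne_one]
    exact dist_le_diam_of_mem (he.isBounded_range_smul c) ⟨0, rfl⟩ ⟨1, rfl⟩

end Orthonormal

lemma isGreatest_chebRadius_of_diam_eq_one (h : ¬ FiniteDimensional ℝ H) :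
    IsGreatest {r : ℝ | ∃ A : Set H, IsBounded A ∧ diam A = 1 ∧ r = chebRadius A} (1 / √2) := by
  have hle : ∀ A : Set H, IsBounded A → diam A = 1 → chebRadius A ≤ 1 / √2 := fun A hA hd =>
    hd ▸ chebRadius_le_diam_div_sqrt_two hA
  refine ⟨?_, by rintro _ ⟨A, hA, hd, rfl⟩; exact hle A hA hd⟩
  obtain ⟨e, he⟩ := exists_orthonormal_nat h
  have hc : (0 : ℝ) ≤ 1 / √2 := by positivity
  have hd : diam (range fun n => (1 / √2) • e n) = 1 := by
    rw [he.diam_range_smul hc]; field_simp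
  exact ⟨_, he.isBounded_range_smul _, hd,
    le_antisymm (he.le_chebRadius_range_smul hc) (hle _ (he.isBounded_range_smul _) hd)⟩

end InfiniteDimensional

theorem stmt18 {H : Type*} [NormedAddCommGroup H] [InnerProductSpace ℝ H] [CompleteSpace H] :
    sSup {r : ℝ | ∃ A : Set H, Bornology.IsBounded A ∧ Metric.diam A = 1 ∧
        r = chebRadiusIn (closure (convexHull ℝ A)) A} =
      sSup {r : ℝ | ∃ A : Set H, Bornology.IsBounded A ∧ Metric.diam A = 1 ∧
        r = chebRadius A} ∧
    (¬ FiniteDimensional ℝ H →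
      sSup {r : ℝ | ∃ A : Set H, Bornology.IsBounded A ∧ Metric.diam A = 1 ∧
        r = chebRadius A} = 1 / Real.sqrt 2) := by
  refine ⟨?_, fun h => (isGreatest_chebRadius_of_diam_eq_one h).csSup_eq⟩
  congr 1
  ext r
  refine exists_congr fun A => and_congr_right fun hA => and_congr_right fun _ => ?_
  rw [chebRadiusIn_closure_convexHull hA]
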